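/- Let n ≥ 1 and let C_x and C_z be cyclic ZMod 2-submodules of (Fin n → ZMod 2) such that C_x⊥ ⊆ C_z, and suppose both C_x and C_z have minimum distance at least 3 (every nonzero codeword has Hamming weight at least 3). Then for every l ∈ {0, 1, …, n−1}, the consecutive error product set at shift l is distinguishable: for all p₁, p₂, q₁, q₂ ∈ {0, 1, …, n−1} with (p₁, q₁) ≠ (p₂, q₂), it is not the case that both L(v_{p₁}, l) + L(v_{p₂}, l) ∈ C_z and L(v_{q₁}, l) + L(v_{q₂}, l) ∈ C_x. (This is the main theorem of the paper: two elements of the consecutive error product set E^P_{l,n}, with X-parts indexed by p detected modulo C_z and Z-parts indexed by q detected modulo C_x, always have distinct syndromes with respect to the CSS code built from C_x and C_z.) -/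

import Mathlib

/-- The consecutive tail vector `v_p`: indicator of the last `p` coordinates. -/
def tailVec (n p : ℕ) : Fin n → ZMod 2 := fun j => if n - p ≤ j.val then 1 else 0

/-- Left cyclic shift by `l` of a vector `v : Fin n → ZMod 2`. -/
def shiftL {n : ℕ} (v : Fin n → ZMod 2) (l : ℕ) : Fin n → ZMod 2 :=
  fun j => v ⟨(j.val + l) % n, Nat.mod_lt _ j.pos⟩

/-- A code is cyclic if it is invariant under left cyclic shifts. -/
def IsCyclicCode {n : ℕ} (C : Submodule (ZMod 2) (Fin n → ZMod 2)) : Prop :=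
  ∀ v ∈ C, ∀ l : ℕ, shiftL v l ∈ C

/-- The dual code `C⊥` with respect to the standard bilinear form. -/
def dualCode {n : ℕ} (C : Submodule (ZMod 2) (Fin n → ZMod 2)) :
    Submodule (ZMod 2) (Fin n → ZMod 2) where
  carrier := {u | ∀ w ∈ C, ∑ j, u j * w j = 0}
  add_mem' := by
    intro a b ha hb w hw
    simp only [Set.mem_setOf_eq, Pi.add_apply, add_mul] at *
    rw [Finset.sum_add_distrib, ha w hw, hb w hw, add_zero]
  zero_mem' := by
    intro w hw
    simp
  smul_mem' := by
    intro c a ha w hw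
    simp only [Set.mem_setOf_eq, Pi.smul_apply, smul_eq_mul, mul_assoc] at *
    rw [← Finset.mul_sum, ha w hw, mul_zero]

/-!
If `w` lies in a cyclic code then so does its discrete derivative `w + L(w, 1)`. The derivative
of a tail indicator only sees its two boundary points, `v_p + L(v_p, 1) = e_{n-p-1} + e_{n-1}`,
so for `w = L(v_p, l) + L(v_q, l)` with `p ≠ q` the derivative is a shift of
`e_{n-p-1} + e_{n-q-1}`, a nonzero word of weight 2, which a code of minimum distance 3 cannot
contain. Since `(p₁, q₁) ≠ (p₂, q₂)`, this applies to `C_z` if `p₁ ≠ p₂` and to `C_x` otherwise.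
-/

lemma hammingNorm_single_add_single {ι R : Type*} [Fintype ι] [DecidableEq ι] [Semiring R]
    [Nontrivial R] [DecidableEq R] {a b : ι} (hab : a ≠ b) :
    hammingNorm (Pi.single a 1 + Pi.single b 1 : ι → R) = 2 := by
  have hsupp : ({i | (Pi.single a 1 + Pi.single b 1 : ι → R) i ≠ 0} : Finset ι) = {a, b} := by
    ext i
    by_cases ha : i = a <;> by_cases hb : i = b <;> simp_all [Pi.single_apply]
  rw [hammingNorm, hsupp, Finset.card_pair hab]

section
variable {n : ℕ}

lemma shiftL_add (v w : Fin n → ZMod 2) (l : ℕ) :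
    shiftL (v + w) l = shiftL v l + shiftL w l := rfl

lemma shiftL_shiftL (v : Fin n → ZMod 2) (l m : ℕ) :
    shiftL (shiftL v l) m = shiftL v (m + l) := by
  funext j
  simp only [shiftL, Nat.mod_add_mod, add_assoc]

lemma shiftL_comm (v : Fin n → ZMod 2) (l m : ℕ) :
    shiftL (shiftL v l) m = shiftL (shiftL v m) l := by
  rw [shiftL_shiftL, shiftL_shiftL, add_comm]

open Fin.NatCast in
lemma shiftL_eq_comp_add [NeZero n] (v : Fin n → ZMod 2) (l : ℕ) :
    shiftL v l = fun j => v (j + (l : Fin n)) := by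
  funext j
  exact congrArg v (Fin.ext (by simp [Fin.add_def, Fin.val_natCast, Nat.add_mod_mod]))

open Fin.NatCast in
lemma hammingNorm_shiftL [NeZero n] (v : Fin n → ZMod 2) (l : ℕ) :
    hammingNorm (shiftL v l) = hammingNorm v := by
  rw [shiftL_eq_comp_add]
  exact Finset.card_equiv (Equiv.addRight (l : Fin n)) (by simp)

lemma tailVec_add_shiftL_one {p : ℕ} (hp : p < n) :
    tailVec n p + shiftL (tailVec n p) 1 =
      Pi.single ⟨n - p - 1, by omega⟩ 1 + Pi.single ⟨n - 1, by omega⟩ 1 := by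
  funext j
  have hj := j.isLt
  simp only [Pi.add_apply, tailVec, shiftL, Pi.single_apply, Fin.ext_iff]
  by_cases hlast : j.val + 1 = n
  · have hwrap : (j.val + 1) % n = 0 := by rw [hlast, Nat.mod_self]
    simp only [hwrap]
    split_ifs <;> first | decide | omega
  · simp only [Nat.mod_eq_of_lt (show j.val + 1 < n by omega)]
    split_ifs <;> first | decide | omega

lemma add_shiftL_one_tailVec_add_tailVec {p q : ℕ} (hp : p < n) (hq : q < n) :
    (tailVec n p + tailVec n q) + shiftL (tailVec n p + tailVec n q) 1 =
      Pi.single ⟨n - p - 1, by omega⟩ 1 + Pi.single ⟨n - q - 1, by omega⟩ 1 := by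
  have : NeZero n := ⟨by omega⟩
  rw [shiftL_add, add_add_add_comm, tailVec_add_shiftL_one hp, tailVec_add_shiftL_one hq,
    add_add_add_comm, CharTwo.add_self_eq_zero, add_zero]

lemma IsCyclicCode.shiftL_tailVec_add_notMem {n : ℕ} {C : Submodule (ZMod 2) (Fin n → ZMod 2)}
    (hC : IsCyclicCode C) (hd : ∀ w ∈ C, w ≠ 0 → 3 ≤ hammingNorm w)
    (l : ℕ) {p q : ℕ} (hp : p < n) (hq : q < n) (hpq : p ≠ q) :
    shiftL (tailVec n p) l + shiftL (tailVec n q) l ∉ C := by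
  have : NeZero n := ⟨by omega⟩
  set a : Fin n := ⟨n - p - 1, by omega⟩
  set b : Fin n := ⟨n - q - 1, by omega⟩
  have hab : a ≠ b := by simp only [a, b, ne_eq, Fin.mk.injEq]; omega
  intro hw
  rw [← shiftL_add] at hw
  set w := shiftL (tailVec n p + tailVec n q) l
  have hdiff : w + shiftL w 1 = shiftL (Pi.single a 1 + Pi.single b 1) l := by
    rw [shiftL_comm, ← shiftL_add, add_shiftL_one_tailVec_add_tailVec hp hq]
  have hweight : hammingNorm (w + shiftL w 1) = 2 := by
    rw [hdiff, hammingNorm_shiftL, hammingNorm_single_add_single (R := ZMod 2) hab]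
  have h3 := hd _ (C.add_mem hw (hC w hw 1)) (by rw [← hammingNorm_ne_zero_iff, hweight]; omega)
  omega

theorem stmt5_general (n : ℕ)
    (Cx Cz : Submodule (ZMod 2) (Fin n → ZMod 2))
    (hCx : IsCyclicCode Cx) (hCz : IsCyclicCode Cz)
    (hdx : ∀ w ∈ Cx, w ≠ 0 → 3 ≤ hammingNorm w)
    (hdz : ∀ w ∈ Cz, w ≠ 0 → 3 ≤ hammingNorm w) :
    ∀ l < n, ∀ p₁ p₂ q₁ q₂ : ℕ, p₁ < n → p₂ < n → q₁ < n → q₂ < n →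
      (p₁, q₁) ≠ (p₂, q₂) →
      ¬(shiftL (tailVec n p₁) l + shiftL (tailVec n p₂) l ∈ Cz ∧
        shiftL (tailVec n q₁) l + shiftL (tailVec n q₂) l ∈ Cx) := by
  intro l _ p₁ p₂ q₁ q₂ hp₁ hp₂ hq₁ hq₂ hne ⟨hz, hx⟩
  by_cases hp : p₁ = p₂
  · have hq : q₁ ≠ q₂ := fun hq => hne (by rw [hp, hq])
    exact hCx.shiftL_tailVec_add_notMem hdx l hq₁ hq₂ hq hx
  · exact hCz.shiftL_tailVec_add_notMem hdz l hp₁ hp₂ hp hz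

theorem stmt5 (n : ℕ) (hn : 1 ≤ n)
    (Cx Cz : Submodule (ZMod 2) (Fin n → ZMod 2))
    (hCx : IsCyclicCode Cx) (hCz : IsCyclicCode Cz)
    (hsub : dualCode Cx ≤ Cz)
    (hdx : ∀ w ∈ Cx, w ≠ 0 → 3 ≤ hammingNorm w)
    (hdz : ∀ w ∈ Cz, w ≠ 0 → 3 ≤ hammingNorm w) :
    ∀ l < n, ∀ p₁ p₂ q₁ q₂ : ℕ, p₁ < n → p₂ < n → q₁ < n → q₂ < n →
      (p₁, q₁) ≠ (p₂, q₂) →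
      ¬(shiftL (tailVec n p₁) l + shiftL (tailVec n p₂) l ∈ Cz ∧
        shiftL (tailVec n q₁) l + shiftL (tailVec n q₂) l ∈ Cx) :=
  stmt5_general n Cx Cz hCx hCz hdx hdz
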